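/- arXiv:1111.3061 — 3 statements merged into one kernel-verified Lean document; each statement's English description precedes it below -/
import Mathlib

section
/- For every n ≥ 1 and every permutation π ∈ Equiv.Perm (Fin n), consider the equivalence relation on ZMod (2n) (the vertices of the 2n-gon) generated by the pairs (i−1) ∼ (2n+1−π(i)) and i ∼ (2n−π(i)) for i = 1,…,n (all residues taken mod 2n); these pairs record the vertex identifications when the i-th black side of the polygon (oriented from vertex i−1 to vertex i) is glued, respecting orientation, to the π(i)-th grey side (oriented from vertex 2n+1−π(i) to vertex 2n−π(i)). Then the number of equivalence classes of this relation equals A(π), the number of alternating cycles of the cycle graph of π. -/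
/-- The permutation of `ZMod (n+1)` fixing `0` and acting as `π` on `{1,…,n}`
(the element `i+1` of `ZMod (n+1)` corresponding to `i : Fin n`). -/
def pihat {n : ℕ} (π : Equiv.Perm (Fin n)) : Equiv.Perm (ZMod (n+1)) :=
  Equiv.Perm.decomposeFin.symm (0, π)

/-- The permutation `v ↦ π̂ (π̂⁻¹ (v+1) - 1)` of `ZMod (n+1)`, whose orbits are the
alternating cycles of the cycle graph of `π`. -/
def cpi {n : ℕ} (π : Equiv.Perm (Fin n)) : Equiv.Perm (ZMod (n+1)) :=
  (Equiv.addRight (1 : ZMod (n+1))).trans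
    ((pihat π).symm.trans ((Equiv.subRight (1 : ZMod (n+1))).trans (pihat π)))

/-- `A n π` is the number of alternating cycles of the cycle graph of `π`: the number of
orbits of the cyclic group generated by `cpi π` acting on `ZMod (n+1)`. -/
noncomputable def A (n : ℕ) (π : Equiv.Perm (Fin n)) : ℕ :=
  Nat.card (MulAction.orbitRel.Quotient (Subgroup.zpowers (cpi π)) (ZMod (n+1)))

/-- The relation on the vertices `ZMod (2n)` of the `2n`-gon recording the vertex
identifications when the `i`-th black side (from vertex `i-1` to vertex `i`, here `i = j+1`
for `j : Fin n`) is glued, respecting orientation, to the `π(i)`-th grey side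
(from vertex `2n+1-π(i)` to vertex `2n-π(i)`). -/
def glueRel {n : ℕ} (π : Equiv.Perm (Fin n)) (a b : ZMod (2*n)) : Prop :=
  ∃ j : Fin n,
    (a = ((j : ℕ) : ZMod (2*n)) ∧
      b = ((2*n+1 : ℕ) : ZMod (2*n)) - (((π j : ℕ) + 1 : ℕ) : ZMod (2*n))) ∨
    (a = (((j : ℕ) + 1 : ℕ) : ZMod (2*n)) ∧
      b = ((2*n : ℕ) : ZMod (2*n)) - (((π j : ℕ) + 1 : ℕ) : ZMod (2*n)))

/-!
Label the vertices of the polygon by `ZMod (n + 1)`: the black vertex `k ≤ n` by `π̂ k` and the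
grey vertex `2n - m` (`0 < m < n`) by `m`. Each gluing identification joins two vertices whose
labels are equal or differ by one step of `c_π`, every step `x ↦ c_π x` is realised by some
identification, and vertices with equal labels are identified, since the grey vertex `2n - π(i)`
is glued to the black vertex `i`. So two vertices are identified exactly when their labels lie in
the same cycle of `c_π`, and the labelling is a bijection from vertex classes onto `c_π`-orbits.
-/

open Equiv MulAction

namespace Equiv.Perm

variable {α β : Type*}

theorem orbitRel_zpowers_iff_sameCycle (c : Perm β) (x y : β) :
    orbitRel (Subgroup.zpowers c) β x y ↔ c.SameCycle x y := by
  rw [orbitRel_apply, mem_orbit_iff, Subgroup.exists_zpowers, sameCycle_comm]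
  rfl

variable {r : α → α → Prop} {c : Perm β} {f : α → β}

theorem eqvGen_of_zpow_apply_eq (hc : ∀ x, ∃ a b, Relation.EqvGen r a b ∧ f a = x ∧ f b = c x)
    (hfib : ∀ a b, f a = f b → Relation.EqvGen r a b) (a : α) (k : ℤ) :
    ∀ b, (c ^ k) (f a) = f b → Relation.EqvGen r a b := by
  have E := Relation.EqvGen.is_equivalence r
  induction k using Int.induction_on with
  | zero => exact hfib a
  | succ k ih =>
    intro b h
    obtain ⟨a₁, b₁, h₁, ha₁, hb₁⟩ := hc ((c ^ (k : ℤ)) (f a))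
    rw [add_comm, zpow_one_add, mul_apply, ← hb₁] at h
    exact E.trans (ih a₁ ha₁.symm) (E.trans h₁ (hfib _ _ h))
  | pred k ih =>
    intro b h
    obtain ⟨a₁, b₁, h₁, ha₁, hb₁⟩ := hc (f b)
    have hb₁' : (c ^ (-(k : ℤ))) (f a) = f b₁ := by
      rw [hb₁, ← h, ← mul_apply, ← zpow_one_add, add_sub_cancel]
    exact E.trans (ih b₁ hb₁') (E.trans (E.symm h₁) (hfib _ _ ha₁))

theorem eqvGen_iff_sameCycle (hr : ∀ a b, r a b → c.SameCycle (f a) (f b))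
    (hc : ∀ x, ∃ a b, Relation.EqvGen r a b ∧ f a = x ∧ f b = c x)
    (hfib : ∀ a b, f a = f b → Relation.EqvGen r a b) (a b : α) :
    Relation.EqvGen r a b ↔ c.SameCycle (f a) (f b) := by
  refine ⟨fun h => ?_, fun ⟨k, hk⟩ => eqvGen_of_zpow_apply_eq hc hfib a k b hk⟩
  induction h with
  | rel a b hab => exact hr a b hab
  | refl a => exact .refl c (f a)
  | symm a b _ ih => exact ih.symm
  | trans a b c _ _ ih₁ ih₂ => exact ih₁.trans ih₂

theorem card_quotient_eqvGen_eq_card_orbitRel_quotient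
    (hr : ∀ a b, r a b → c.SameCycle (f a) (f b))
    (hc : ∀ x, ∃ a b, Relation.EqvGen r a b ∧ f a = x ∧ f b = c x)
    (hfib : ∀ a b, f a = f b → Relation.EqvGen r a b) :
    Nat.card (Quotient (Relation.EqvGen.setoid r)) =
      Nat.card (orbitRel.Quotient (Subgroup.zpowers c) β) := by
  let F : α → orbitRel.Quotient (Subgroup.zpowers c) β := fun a => ⟦f a⟧
  have hF : Function.Surjective F := by
    rintro ⟨x⟩
    obtain ⟨a, -, -, rfl, -⟩ := hc x
    exact ⟨a, rfl⟩
  have hker : ∀ a b, Relation.EqvGen r a b ↔ Setoid.ker F a b := fun a b => by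
    rw [eqvGen_iff_sameCycle hr hc hfib, Setoid.ker_def, Quotient.eq,
      orbitRel_zpowers_iff_sameCycle]
  exact Nat.card_congr ((Quotient.congrRight hker).trans (Setoid.quotientKerEquivOfSurjective F hF))

end Equiv.Perm

namespace ZMod

variable {n : ℕ}

theorem natCast_self_eq_neg_one : ((n : ℕ) : ZMod (n + 1)) = -1 :=
  eq_neg_of_add_eq_zero_left (by exact_mod_cast ZMod.natCast_self (n + 1))

theorem natCast_add_one_eq_neg_one {k : ℕ} (h : k + 1 = n) : (k : ZMod (n + 1)) + 1 = -1 := by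
  subst h
  exact_mod_cast natCast_self_eq_neg_one (n := k + 1)

theorem natCast_succ_eq_finSucc (i : Fin n) :
    ((i : ℕ) + 1 : ZMod (n + 1)) = (i.succ : Fin (n + 1)) := by
  rw [← Nat.cast_add_one, ← Fin.val_succ]
  exact natCast_zmod_val (n := n + 1) i.succ

end ZMod

section Pihat

variable {n : ℕ} (π : Perm (Fin n))

theorem pihat_zero : pihat π 0 = 0 :=
  Perm.decomposeFin_symm_apply_zero 0 π

theorem pihat_natCast_succ (j : Fin n) :
    pihat π ((j : ℕ) + 1 : ZMod (n + 1)) = (π j : ℕ) + 1 := by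
  rw [ZMod.natCast_succ_eq_finSucc, ZMod.natCast_succ_eq_finSucc]
  exact (Perm.decomposeFin_symm_apply_succ π 0 j).trans (by rw [swap_self, refl_apply])

theorem cpi_apply (x : ZMod (n + 1)) : cpi π x = pihat π ((pihat π).symm (x + 1) - 1) := by
  simp only [cpi, trans_apply, coe_addRight, subRight_apply]

theorem cpi_natCast (j : Fin n) : cpi π (π j : ℕ) = pihat π (j : ℕ) := by
  rw [cpi_apply, ← pihat_natCast_succ, symm_apply_apply, add_sub_cancel_right]

theorem cpi_neg_one : cpi π (-1) = pihat π (-1) := by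
  rw [cpi_apply, neg_add_cancel, ← pihat_zero π, symm_apply_apply, zero_sub]

end Pihat

section VertexLabel

variable {n : ℕ} (π : Perm (Fin n))

def vertexLabel (v : ZMod (2 * n)) : ZMod (n + 1) :=
  if v.val ≤ n then pihat π v.val else ((2 * n - v.val : ℕ) : ZMod (n + 1))

def blackVertex (x : ZMod (n + 1)) : ZMod (2 * n) := ((pihat π).symm x).val

theorem blackVertex_pihat_natCast {k : ℕ} (hk : k ≤ n) : blackVertex π (pihat π k) = k := by
  rw [blackVertex, symm_apply_apply, ZMod.val_natCast_of_lt (Nat.lt_succ_of_le hk)]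

variable [NeZero n]

theorem vertexLabel_natCast_of_le {k : ℕ} (hk : k ≤ n) : vertexLabel π k = pihat π k := by
  have : k < 2 * n := by have := NeZero.pos n; omega
  simp [vertexLabel, ZMod.val_natCast_of_lt this, hk]

theorem vertexLabel_natCast_two_mul_sub {m : ℕ} (hm : m < n) :
    vertexLabel π (2 * n - m : ℕ) = m := by
  rcases Nat.eq_zero_or_pos m with rfl | hm₀
  · simpa [ZMod.natCast_self] using
      (vertexLabel_natCast_of_le π (Nat.zero_le n)).trans (pihat_zero π)
  · have : ¬ 2 * n - m ≤ n := by omega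
    simp [vertexLabel, ZMod.val_natCast_of_lt (show 2 * n - m < 2 * n by omega), this,
      Nat.sub_sub_self (show m ≤ 2 * n by omega)]

theorem vertexLabel_natCast_add_one (j : Fin n) :
    vertexLabel π (((j : ℕ) + 1 : ℕ) : ZMod (2 * n)) = (π j : ℕ) + 1 := by
  rw [vertexLabel_natCast_of_le π j.isLt, Nat.cast_add_one, pihat_natCast_succ]

theorem vertexLabel_greySide_start (j : Fin n) :
    vertexLabel π (((2 * n + 1 : ℕ) : ZMod (2 * n)) - (((π j : ℕ) + 1 : ℕ) : ZMod (2 * n))) =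
      (π j : ℕ) := by
  have hj := (π j).isLt
  rw [← Nat.cast_sub (by omega), show 2 * n + 1 - ((π j : ℕ) + 1) = 2 * n - π j by omega,
    vertexLabel_natCast_two_mul_sub π hj]

theorem vertexLabel_greySide_end (j : Fin n) :
    vertexLabel π (((2 * n : ℕ) : ZMod (2 * n)) - (((π j : ℕ) + 1 : ℕ) : ZMod (2 * n))) =
      if (π j : ℕ) + 1 = n then pihat π (-1) else (π j : ℕ) + 1 := by
  have hj := (π j).isLt
  rw [← Nat.cast_sub (by omega)]
  split_ifs with h
  · rw [show 2 * n - ((π j : ℕ) + 1) = n by omega, vertexLabel_natCast_of_le π le_rfl,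
      ZMod.natCast_self_eq_neg_one]
  · rw [vertexLabel_natCast_two_mul_sub π (by omega), Nat.cast_add_one]

end VertexLabel

section Gluing

variable {n : ℕ} [NeZero n] (π : Perm (Fin n))

theorem sameCycle_vertexLabel_of_glueRel {a b : ZMod (2 * n)} (h : glueRel π a b) :
    (cpi π).SameCycle (vertexLabel π a) (vertexLabel π b) := by
  obtain ⟨j, ⟨rfl, rfl⟩ | ⟨rfl, rfl⟩⟩ := h
  · rw [vertexLabel_natCast_of_le π j.isLt.le, vertexLabel_greySide_start, ← cpi_natCast]
    exact Perm.sameCycle_apply_left.2 .rfl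
  · rw [vertexLabel_natCast_add_one, vertexLabel_greySide_end]
    split_ifs with h
    · rw [ZMod.natCast_add_one_eq_neg_one h, ← cpi_neg_one]
      exact Perm.sameCycle_apply_right.2 .rfl
    · exact .rfl

theorem exists_eqvGen_glueRel_vertexLabel_eq_cpi (x : ZMod (n + 1)) :
    ∃ a b, Relation.EqvGen (glueRel π) a b ∧ vertexLabel π a = x ∧ vertexLabel π b = cpi π x := by
  rcases (Nat.lt_succ_iff.1 (ZMod.val_lt x)).lt_or_eq with hx | hx
  · set j := π.symm ⟨x.val, hx⟩
    have hj : ((π j : ℕ) : ZMod (n + 1)) = x := by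
      rw [apply_symm_apply, ZMod.natCast_zmod_val]
    refine ⟨_, _, .symm _ _ (.rel _ _ ⟨j, .inl ⟨rfl, rfl⟩⟩), ?_, ?_⟩
    · rw [vertexLabel_greySide_start, hj]
    · rw [vertexLabel_natCast_of_le π j.isLt.le, ← hj, cpi_natCast]
  · set j := π.symm ⟨n - 1, Nat.sub_lt (NeZero.pos n) one_pos⟩
    have hj : (π j : ℕ) + 1 = n := by
      rw [apply_symm_apply]
      exact Nat.sub_add_cancel (NeZero.pos n)
    have hx' : x = -1 := by rw [← ZMod.natCast_zmod_val x, hx, ZMod.natCast_self_eq_neg_one]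
    refine ⟨_, _, .rel _ _ ⟨j, .inr ⟨rfl, rfl⟩⟩, ?_, ?_⟩
    · rw [vertexLabel_natCast_add_one, hx', ZMod.natCast_add_one_eq_neg_one hj]
    · rw [vertexLabel_greySide_end, if_pos hj, hx', cpi_neg_one]

theorem vertexLabel_blackVertex (x : ZMod (n + 1)) : vertexLabel π (blackVertex π x) = x := by
  rw [blackVertex, vertexLabel_natCast_of_le π (Nat.lt_succ_iff.1 (ZMod.val_lt _)),
    ZMod.natCast_zmod_val, apply_symm_apply]

theorem eqvGen_glueRel_blackVertex_vertexLabel (v : ZMod (2 * n)) :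
    Relation.EqvGen (glueRel π) (blackVertex π (vertexLabel π v)) v := by
  by_cases hv : v.val ≤ n
  · rw [vertexLabel, if_pos hv, blackVertex_pihat_natCast π hv, ZMod.natCast_zmod_val]
    exact .refl v
  · have hv₂ := ZMod.val_lt v
    set j := π.symm ⟨2 * n - v.val - 1, by omega⟩
    have hj : (π j : ℕ) = 2 * n - v.val - 1 := by rw [apply_symm_apply]
    have hlabel : vertexLabel π v = pihat π (((j : ℕ) + 1 : ℕ) : ZMod (n + 1)) := by
      rw [vertexLabel, if_neg hv, Nat.cast_add_one, pihat_natCast_succ, hj, ← Nat.cast_add_one,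
        Nat.sub_add_cancel (by omega)]
    rw [hlabel, blackVertex_pihat_natCast π j.isLt]
    refine .rel _ _ ⟨j, .inr ⟨rfl, ?_⟩⟩
    rw [← Nat.cast_sub (by omega), hj, show 2 * n - (2 * n - v.val - 1 + 1) = v.val by omega,
      ZMod.natCast_zmod_val]

theorem eqvGen_glueRel_of_vertexLabel_eq {a b : ZMod (2 * n)}
    (h : vertexLabel π a = vertexLabel π b) : Relation.EqvGen (glueRel π) a b := by
  have E := Relation.EqvGen.is_equivalence (glueRel π)
  exact E.trans (E.symm (eqvGen_glueRel_blackVertex_vertexLabel π a))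
    (h ▸ eqvGen_glueRel_blackVertex_vertexLabel π b)

end Gluing

/-- The number of equivalence classes of the vertex-identification relation of the glued
`2n`-gon equals the number of alternating cycles of the cycle graph of `π`. -/
theorem polygon_gluing_vertices_eq_alternating_cycles (n : ℕ) (hn : 1 ≤ n)
    (π : Equiv.Perm (Fin n)) :
    Nat.card (Quotient (Relation.EqvGen.setoid (glueRel π))) = A n π := by
  have : NeZero n := ⟨by omega⟩
  exact Perm.card_quotient_eqvGen_eq_card_orbitRel_quotient
    (fun _ _ => sameCycle_vertexLabel_of_glueRel π) (exists_eqvGen_glueRel_vertexLabel_eq_cpi π)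
    (fun _ _ => eqvGen_glueRel_of_vertexLabel_eq π)
end

section
/- For every n and every permutation π ∈ Equiv.Perm (Fin n), the number A(π) of alternating cycles of the cycle graph of π satisfies A(π) ≡ n + 1 (mod 2). Consequently, the Hultman number H(n,k) equals 0 whenever n − k is even. -/
/-- The Hultman number `H n k`: the number of permutations of `Fin n` whose cycle graph
has exactly `k` alternating cycles. -/
noncomputable def H (n k : ℕ) : ℕ := Nat.card {π : Equiv.Perm (Fin n) // A n π = k}

open Equiv Equiv.Perm in
theorem card_orbits_eq {α : Type*} [Fintype α] [DecidableEq α] (σ : Perm α) :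
    Nat.card (MulAction.orbitRel.Quotient (Subgroup.zpowers σ) α)
      = (Fintype.card α - σ.support.card) + σ.cycleFactorsFinset.card := by
  classical
  have hrel : ∀ x y : α, (MulAction.orbitRel (Subgroup.zpowers σ) α).r x y ↔ σ.SameCycle y x := by
    intro x y
    constructor
    · rintro ⟨⟨g, k, rfl⟩, hg⟩
      exact ⟨k, hg⟩
    · rintro ⟨k, hk⟩
      exact ⟨⟨σ ^ k, k, rfl⟩, hk⟩
  have e : MulAction.orbitRel.Quotient (Subgroup.zpowers σ) α ≃
      ({x : α // σ x = x} ⊕ σ.cycleFactorsFinset) := by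
    refine Equiv.ofBijective (Quotient.lift (fun x =>
      if h : σ x = x then Sum.inl ⟨x, h⟩ else
        Sum.inr ⟨σ.cycleOf x, cycleOf_mem_cycleFactorsFinset_iff.mpr (mem_support.mpr h)⟩) ?_) ?_
    · intro x y hxy
      have hsc : σ.SameCycle y x := (hrel x y).mp hxy
      by_cases h : σ x = x
      · have : y = x := by
          obtain ⟨k, hk⟩ := hsc.symm
          rw [← hk, (σ.zpow_apply_eq_self_of_apply_eq_self h k)]
        subst this; rfl
      · have hy : ¬ σ y = y := by
          intro hy
          obtain ⟨k, hk⟩ := hsc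
          rw [σ.zpow_apply_eq_self_of_apply_eq_self hy k] at hk
          rw [hk] at hy
          exact h hy
        simp only [dif_neg h, dif_neg hy]
        congr 1
        exact Subtype.ext hsc.cycleOf_eq.symm
    · constructor
      · intro a b hab
        induction a using Quotient.inductionOn with | h x =>
        induction b using Quotient.inductionOn with | h y =>
        apply Quotient.sound
        refine (hrel x y).mpr ?_
        simp only [Quotient.lift_mk] at hab
        split_ifs at hab with hx hy
        · rw [Sum.inl.injEq, Subtype.mk.injEq] at hab
          subst hab
          exact SameCycle.refl _ _
        · rw [Sum.inr.injEq, Subtype.mk.injEq] at hab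
          have hxs : x ∈ (σ.cycleOf x).support := by
            rw [mem_support_cycleOf_iff]
            exact ⟨SameCycle.refl _ _, mem_support.mpr hx⟩
          rw [hab, mem_support_cycleOf_iff] at hxs
          exact hxs.1
      · rintro (⟨x, hx⟩ | ⟨c, hc⟩)
        · exact ⟨Quotient.mk _ x, by simp [dif_pos hx]⟩
        · obtain ⟨a, ha⟩ := (mem_cycleFactorsFinset_iff.mp hc).1.nonempty_support
          have haa : σ a ≠ a := by
            intro h
            have := (mem_cycleFactorsFinset_iff.mp hc).2 a ha
            rw [h] at this
            exact (mem_support.mp ha) this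
          refine ⟨Quotient.mk _ a, ?_⟩
          simp only [Quotient.lift_mk, dif_neg haa]
          congr 1
          exact Subtype.ext (cycle_is_cycleOf ha hc).symm
  rw [Nat.card_congr e, Nat.card_sum]
  congr 1
  · rw [Nat.card_eq_fintype_card, Fintype.card_subtype, ← Finset.card_compl σ.support]
    congr 1
    ext x
    simp [Equiv.Perm.mem_support, not_not]
  · simp [Nat.card_eq_fintype_card]

lemma sign_cpi {n : ℕ} (π : Equiv.Perm (Fin n)) : Equiv.Perm.sign (cpi π) = 1 := by
  have h : cpi π = (pihat π) * (Equiv.subRight (1 : ZMod (n+1))) * (pihat π)⁻¹ *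
      (Equiv.addRight (1 : ZMod (n+1))) := rfl
  have h2 : (Equiv.subRight (1 : ZMod (n+1)) : Equiv.Perm (ZMod (n+1))) =
      (Equiv.addRight (1 : ZMod (n+1)) : Equiv.Perm (ZMod (n+1)))⁻¹ := by
    ext x; simp [Equiv.Perm.inv_def, sub_eq_add_neg]
  have key : ∀ u v : ℤˣ, u * v⁻¹ * u⁻¹ * v = 1 := by decide
  rw [h, h2, map_mul, map_mul, map_mul, map_inv, map_inv]
  exact key _ _

/-- The number of alternating cycles of the cycle graph of a permutation of `Fin n` is
congruent to `n + 1` modulo `2`; consequently `H n k = 0` whenever `n - k` is even. -/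
theorem alternating_cycles_parity :
    (∀ (n : ℕ) (π : Equiv.Perm (Fin n)), A n π ≡ n + 1 [MOD 2]) ∧
    (∀ n k : ℕ, Even ((n : ℤ) - (k : ℤ)) → H n k = 0) := by
  have key : ∀ (n : ℕ) (π : Equiv.Perm (Fin n)), A n π ≡ n + 1 [MOD 2] := by
    intro n π
    classical
    set σ := cpi π with hσ
    have hA : A n π = (Fintype.card (ZMod (n+1)) - σ.support.card) +
        σ.cycleFactorsFinset.card := card_orbits_eq σ
    have hcard : Fintype.card (ZMod (n+1)) = n + 1 := ZMod.card _
    have hs : σ.support.card ≤ n + 1 :=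
      le_trans (Finset.card_le_univ _) (le_of_eq hcard)
    have hct : Multiset.card σ.cycleType = σ.cycleFactorsFinset.card := by
      simp [Equiv.Perm.cycleType]
    have hsign := Equiv.Perm.sign_of_cycleType σ
    rw [sign_cpi, Equiv.Perm.sum_cycleType, hct] at hsign
    have heven : Even (σ.support.card + σ.cycleFactorsFinset.card) := by
      by_contra hodd
      rw [Nat.not_even_iff_odd] at hodd
      rw [hodd.neg_one_pow] at hsign
      exact absurd hsign (by decide)
    obtain ⟨r, hr⟩ := heven
    rw [hcard] at hA
    unfold Nat.ModEq
    omega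
  refine ⟨key, ?_⟩
  intro n k hk
  have he : IsEmpty {π : Equiv.Perm (Fin n) // A n π = k} := by
    constructor
    rintro ⟨π, hπ⟩
    have h1 := key n π
    rw [hπ] at h1
    unfold Nat.ModEq at h1
    obtain ⟨r, hr⟩ := hk
    omega
  exact Nat.card_of_isEmpty
end

section
/- For every n ≥ 0, H(n, n+1) = 1; that is, the identity is the unique permutation π ∈ Equiv.Perm (Fin n) whose cycle graph has n+1 alternating cycles (equivalently, the genus-0 generating function satisfies H_0(x) = 1/(1−x)). -/
/-!
`A n π` counts the orbits of `⟨cpi π⟩` on the `n + 1` points of `ZMod (n+1)`, so it equals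
`n + 1` exactly when `cpi π` is the identity. That happens iff `π̂⁻¹` commutes with `v ↦ v + 1`;
as `π̂⁻¹` also fixes `0`, it is then the identity on all of `ZMod (n+1)`, hence `π = 1`.
-/

open MulAction

theorem MulAction.card_orbitRel_quotient_eq_card_iff {G α : Type*} [Group G] [MulAction G α]
    [Finite α] :
    Nat.card (orbitRel.Quotient G α) = Nat.card α ↔ ∀ (g : G) (x : α), g • x = x := by
  have hsurj : Function.Surjective (Quotient.mk'' : α → orbitRel.Quotient G α) :=
    Quotient.mk''_surjective
  rw [eq_comm, ← (Nat.bijective_iff_surjective_and_card _).trans (and_iff_right hsurj)]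
  refine ⟨fun hbij g x => hbij.1 (Quotient.sound' ⟨g, rfl⟩), fun hfix => ⟨?_, hsurj⟩⟩
  intro a b hab
  obtain ⟨g, rfl⟩ := Quotient.exact' hab
  exact hfix g b

theorem Equiv.Perm.card_orbitRel_quotient_zpowers_eq_card_iff {α : Type*} [Finite α]
    (σ : Equiv.Perm α) :
    Nat.card (orbitRel.Quotient (Subgroup.zpowers σ) α) = Nat.card α ↔ σ = 1 := by
  rw [card_orbitRel_quotient_eq_card_iff]
  constructor
  · intro hfix
    ext x
    exact hfix ⟨σ, Subgroup.mem_zpowers σ⟩ x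
  · rintro rfl ⟨g, hg⟩ x
    rw [Subgroup.zpowers_one_eq_bot, Subgroup.mem_bot] at hg
    subst hg
    rfl

theorem ZMod.eq_id_of_map_add_one {m : ℕ} [NeZero m] (f : ZMod m → ZMod m) (h₀ : f 0 = 0)
    (hsucc : ∀ v, f (v + 1) = f v + 1) : f = id := by
  have hnat : ∀ k : ℕ, f k = k := by
    intro k
    induction k with
    | zero => simpa using h₀
    | succ k ih => push_cast; rw [hsucc, ih]
  funext v
  obtain ⟨k, rfl⟩ := ZMod.natCast_zmod_surjective v
  exact hnat k

section CycleGraph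

variable {n : ℕ}

theorem pihat_injective : Function.Injective (pihat : Equiv.Perm (Fin n) → _) := fun _ _ h =>
  (Prod.mk.inj (Equiv.Perm.decomposeFin.symm.injective h)).2

theorem pihat_apply_zero (π : Equiv.Perm (Fin n)) : pihat π 0 = 0 :=
  Equiv.Perm.decomposeFin_symm_apply_zero 0 π

@[simp]
theorem pihat_one : pihat (1 : Equiv.Perm (Fin n)) = 1 := by
  rw [pihat, Equiv.Perm.decomposeFin_symm_of_one, Equiv.swap_self]
  rfl

theorem cpi_eq_one_iff (π : Equiv.Perm (Fin n)) : cpi π = 1 ↔ π = 1 := by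
  refine ⟨fun h => ?_, fun h => by ext v; simp [cpi, h, ← Equiv.Perm.inv_def]⟩
  have hsucc : ∀ v, (pihat π).symm (v + 1) = (pihat π).symm v + 1 := by
    intro v
    have hv : pihat π ((pihat π).symm (v + 1) - 1) = v := Equiv.ext_iff.mp h v
    exact eq_add_of_sub_eq ((Equiv.eq_symm_apply _).mpr hv)
  have hsymm : (pihat π).symm = 1 := Equiv.ext <| congrFun <|
    ZMod.eq_id_of_map_add_one _ ((pihat π).symm_apply_eq.mpr (pihat_apply_zero π).symm) hsucc
  apply pihat_injective
  rw [pihat_one, ← Equiv.symm_symm (pihat π), hsymm]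
  rfl

theorem A_eq_add_one_iff (π : Equiv.Perm (Fin n)) : A n π = n + 1 ↔ π = 1 := by
  rw [← cpi_eq_one_iff, ← Equiv.Perm.card_orbitRel_quotient_zpowers_eq_card_iff, Nat.card_zmod]
  rfl

end CycleGraph

/-- `H(n, n+1) = 1`: the identity is the unique permutation of `Fin n` whose cycle graph
has `n+1` alternating cycles. -/
theorem hultman_top (n : ℕ) :
    H n (n + 1) = 1 ∧ ∀ π : Equiv.Perm (Fin n), A n π = n + 1 ↔ π = 1 := by
  refine ⟨?_, A_eq_add_one_iff⟩
  rw [H, Nat.card_congr (Equiv.subtypeEquivRight A_eq_add_one_iff)]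
  exact Nat.card_unique
end
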